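/- Let H and H̃ be separable complex Hilbert spaces, A ∈ B(H) and B ∈ B(H̃), and assume σ(B) = σ_p(B) = ℂ \ ρ_sF(A). Then for the direct sum operator A ⊕ B on H ⊕ H̃: (i) ρ_sF(A ⊕ B) = ρ_sF(A); (ii) ind(A ⊕ B − λ) = ind(A − λ) for all λ ∈ ρ_sF(A ⊕ B); (iii) min ind((A ⊕ B − λ)^k) = min ind((A − λ)^k) for all λ ∈ ρ_sF(A ⊕ B) and all integers k ≥ 1. -/

import Mathlib

noncomputable section

/-- The point spectrum of a bounded operator: the set of `l : ℂ` such that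
`T - l • id` has nontrivial kernel. -/
def pointSpectrum {E : Type*} [NormedAddCommGroup E] [InnerProductSpace ℂ E]
    (T : E →L[ℂ] E) : Set ℂ :=
  {l : ℂ | LinearMap.ker ((T - l • (1 : E →L[ℂ] E) : E →L[ℂ] E) : E →ₗ[ℂ] E) ≠ ⊥}

/-- An operator is semi-Fredholm if it has closed range and its kernel or the kernel
of its adjoint is finite dimensional. -/
def IsSemiFredholm {E : Type*} [NormedAddCommGroup E] [InnerProductSpace ℂ E]
    [CompleteSpace E] (T : E →L[ℂ] E) : Prop :=
  IsClosed (Set.range T) ∧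
    (FiniteDimensional ℂ (LinearMap.ker (T : E →ₗ[ℂ] E)) ∨
      FiniteDimensional ℂ (LinearMap.ker (ContinuousLinearMap.adjoint T : E →ₗ[ℂ] E)))

/-- `ρ_sF(T)`: the set of `l : ℂ` such that `T - l • id` is semi-Fredholm. -/
def rhoSF {E : Type*} [NormedAddCommGroup E] [InnerProductSpace ℂ E]
    [CompleteSpace E] (T : E →L[ℂ] E) : Set ℂ :=
  {l : ℂ | IsSemiFredholm (T - l • (1 : E →L[ℂ] E))}

open Classical in
/-- The Fredholm index of a (semi-Fredholm) operator, with values in `ℤ ∪ {-∞, +∞}`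
(encoded as `WithBot (WithTop ℤ)`): `ind T = dim ker T - dim ker T*`; it is `+∞` if
`ker T` is infinite dimensional and `-∞` if `ker T` is finite dimensional but `ker T*`
is not. -/
def opIndex {E : Type*} [NormedAddCommGroup E] [InnerProductSpace ℂ E] [CompleteSpace E]
    (T : E →L[ℂ] E) : WithBot (WithTop ℤ) :=
  if FiniteDimensional ℂ (LinearMap.ker (T : E →ₗ[ℂ] E)) then
    if FiniteDimensional ℂ (LinearMap.ker (ContinuousLinearMap.adjoint T : E →ₗ[ℂ] E)) then
      ((((Module.finrank ℂ (LinearMap.ker (T : E →ₗ[ℂ] E)) : ℤ) -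
          (Module.finrank ℂ (LinearMap.ker (ContinuousLinearMap.adjoint T : E →ₗ[ℂ] E)) : ℤ) : ℤ) :
        WithTop ℤ) : WithBot (WithTop ℤ))
    else ⊥
  else ⊤

/-- The direct sum `A ⊕ B` of two operators, acting on the Hilbert space direct sum
`H ⊕ H̃`, realized as `WithLp 2 (E × F)`. -/
noncomputable def dsum {E F : Type*} [NormedAddCommGroup E] [InnerProductSpace ℂ E]
    [NormedAddCommGroup F] [InnerProductSpace ℂ F]
    (A : E →L[ℂ] E) (B : F →L[ℂ] F) : WithLp 2 (E × F) →L[ℂ] WithLp 2 (E × F) :=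
  ((WithLp.prodContinuousLinearEquiv 2 ℂ E F).symm : (E × F) →L[ℂ] WithLp 2 (E × F)) ∘L
    (A.prodMap B) ∘L
    ((WithLp.prodContinuousLinearEquiv 2 ℂ E F) : WithLp 2 (E × F) →L[ℂ] (E × F))

universe u

/-! For `l ∈ ρ_sF(A)` the hypothesis `σ(B) = ℂ \ ρ_sF(A)` makes `B - l` invertible. In
`(A ⊕ B - l)^k = (A - l)^k ⊕ (B - l)^k` the invertible summand then has full range and, like its
adjoint, trivial kernel, so closedness of the range and the kernels of the operator and of its
adjoint are those of the `A`-summand. Conversely, if `A ⊕ B - l` is semi-Fredholm then so is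
`A - l`, since `ker (A ⊕ B - l) ≃ ker (A - l) × ker (B - l)` and the range of a direct sum is the
product of the ranges. -/

theorem ContinuousLinearMap.bijective_of_isUnit {𝕜 G : Type*} [NormedField 𝕜]
    [NormedAddCommGroup G] [NormedSpace 𝕜 G] {S : G →L[𝕜] G} (hS : IsUnit S) :
    Function.Bijective S :=
  (Module.End.isUnit_iff _).1 (hS.map ContinuousLinearMap.toLinearMapRingHom)

theorem ContinuousLinearMap.isUnit_sub_smul_one_of_notMem_spectrum {𝕜 G : Type*} [NormedField 𝕜]
    [NormedAddCommGroup G] [NormedSpace 𝕜 G] {S : G →L[𝕜] G} {l : 𝕜}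
    (hl : l ∉ spectrum 𝕜 S) : IsUnit (S - l • 1) := by
  simpa [Algebra.algebraMap_eq_smul_one] using (spectrum.notMem_iff.1 hl).neg

section

open ContinuousLinearMap

variable {E F : Type*} [NormedAddCommGroup E] [InnerProductSpace ℂ E]
  [NormedAddCommGroup F] [InnerProductSpace ℂ F]

theorem dsum_sub_smul_one (T : E →L[ℂ] E) (S : F →L[ℂ] F) (l : ℂ) :
    dsum T S - l • 1 = dsum (T - l • 1) (S - l • 1) := by
  ext x; rfl

theorem dsum_pow (T : E →L[ℂ] E) (S : F →L[ℂ] F) (k : ℕ) :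
    dsum T S ^ k = dsum (T ^ k) (S ^ k) := by
  induction k with
  | zero => ext x; rfl
  | succ k ih =>
    rw [pow_succ, ih]
    ext x; rfl

def kerDsumEquiv (T : E →L[ℂ] E) (S : F →L[ℂ] F) :
    LinearMap.ker (dsum T S : WithLp 2 (E × F) →ₗ[ℂ] WithLp 2 (E × F)) ≃ₗ[ℂ]
      LinearMap.ker (T : E →ₗ[ℂ] E) × LinearMap.ker (S : F →ₗ[ℂ] F) where
  toFun x := (⟨x.1.fst, congrArg WithLp.fst x.2⟩, ⟨x.1.snd, congrArg WithLp.snd x.2⟩)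
  invFun y := ⟨WithLp.toLp 2 (y.1, y.2), WithLp.ofLp_injective 2 (Prod.ext y.1.2 y.2.2)⟩
  map_add' _ _ := rfl
  map_smul' _ _ := rfl
  left_inv _ := rfl
  right_inv _ := rfl

def kerDsumEquivOfInjective (T : E →L[ℂ] E) (S : F →L[ℂ] F) (hS : Function.Injective S) :
    LinearMap.ker (dsum T S : WithLp 2 (E × F) →ₗ[ℂ] WithLp 2 (E × F)) ≃ₗ[ℂ]
      LinearMap.ker (T : E →ₗ[ℂ] E) :=
  have : Unique (LinearMap.ker (S : F →ₗ[ℂ] F)) :=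
    ⟨⟨0⟩, fun x => Subtype.ext (hS (x.2.trans (map_zero S).symm))⟩
  (kerDsumEquiv T S).trans LinearEquiv.prodUnique

theorem FiniteDimensional.ker_of_ker_dsum {T : E →L[ℂ] E} {S : F →L[ℂ] F}
    (h : FiniteDimensional ℂ
      (LinearMap.ker (dsum T S : WithLp 2 (E × F) →ₗ[ℂ] WithLp 2 (E × F)))) :
    FiniteDimensional ℂ (LinearMap.ker (T : E →ₗ[ℂ] E)) :=
  Module.Finite.of_surjective (LinearMap.fst ℂ _ _ ∘ₗ (kerDsumEquiv T S).toLinearMap)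
    (Prod.fst_surjective.comp (kerDsumEquiv T S).surjective)

theorem isClosed_range_dsum_iff (T : E →L[ℂ] E) (S : F →L[ℂ] F) :
    IsClosed (Set.range (dsum T S)) ↔ IsClosed (Set.range T) ∧ IsClosed (Set.range S) := by
  let e := (WithLp.prodContinuousLinearEquiv 2 ℂ E F).toHomeomorph
  have hrange : Set.range (dsum T S) = e ⁻¹' (Set.range T ×ˢ Set.range S) := by
    rw [← Set.range_prodMap]
    ext x
    exact ⟨fun ⟨y, hy⟩ => ⟨y.ofLp, hy ▸ rfl⟩,
      fun ⟨y, hy⟩ => ⟨WithLp.toLp 2 y, WithLp.ofLp_injective 2 hy⟩⟩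
  have hne : (Set.range T ×ˢ Set.range S).Nonempty := ⟨(0, 0), ⟨0, map_zero T⟩, ⟨0, map_zero S⟩⟩
  rw [hrange, e.isClosed_preimage, ← closure_eq_iff_isClosed, ← closure_eq_iff_isClosed,
    ← closure_eq_iff_isClosed, closure_prod_eq, Set.prod_eq_prod_iff_of_nonempty]
  exact hne.mono (Set.prod_mono subset_closure subset_closure)

end

section

open ContinuousLinearMap

variable {E F : Type*} [NormedAddCommGroup E] [InnerProductSpace ℂ E] [CompleteSpace E]
  [NormedAddCommGroup F] [InnerProductSpace ℂ F] [CompleteSpace F]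

theorem adjoint_dsum (T : E →L[ℂ] E) (S : F →L[ℂ] F) :
    adjoint (dsum T S) = dsum (adjoint T) (adjoint S) := by
  refine ((eq_adjoint_iff _ _).2 fun x y => ?_).symm
  change inner ℂ (adjoint T x.fst) y.fst + inner ℂ (adjoint S x.snd) y.snd =
    inner ℂ x.fst (T y.fst) + inner ℂ x.snd (S y.snd)
  rw [adjoint_inner_left, adjoint_inner_left]

theorem opIndex_eq_of_linearEquiv {T : E →L[ℂ] E} {T' : F →L[ℂ] F}
    (e : LinearMap.ker (T : E →ₗ[ℂ] E) ≃ₗ[ℂ] LinearMap.ker (T' : F →ₗ[ℂ] F))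
    (e' : LinearMap.ker (adjoint T : E →ₗ[ℂ] E) ≃ₗ[ℂ] LinearMap.ker (adjoint T' : F →ₗ[ℂ] F)) :
    opIndex T = opIndex T' := by
  rw [opIndex, opIndex, FiniteDimensional, FiniteDimensional, Module.Finite.equiv_iff e,
    Module.Finite.equiv_iff e', e.finrank_eq, e'.finrank_eq]

theorem IsUnit.adjoint {S : F →L[ℂ] F} (hS : IsUnit S) : IsUnit (adjoint S) :=
  star_eq_adjoint S ▸ hS.star

theorem IsSemiFredholm.of_dsum {T : E →L[ℂ] E} {S : F →L[ℂ] F}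
    (h : IsSemiFredholm (dsum T S)) : IsSemiFredholm T := by
  obtain ⟨hclosed, hker⟩ := h
  refine ⟨((isClosed_range_dsum_iff T S).1 hclosed).1, ?_⟩
  rw [adjoint_dsum] at hker
  exact hker.imp FiniteDimensional.ker_of_ker_dsum FiniteDimensional.ker_of_ker_dsum

theorem isSemiFredholm_dsum_iff_of_isUnit (T : E →L[ℂ] E) {S : F →L[ℂ] F} (hS : IsUnit S) :
    IsSemiFredholm (dsum T S) ↔ IsSemiFredholm T := by
  rw [IsSemiFredholm, IsSemiFredholm, isClosed_range_dsum_iff, adjoint_dsum,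
    (bijective_of_isUnit hS).surjective.range_eq, FiniteDimensional, FiniteDimensional,
    Module.Finite.equiv_iff (kerDsumEquivOfInjective T S (bijective_of_isUnit hS).injective),
    Module.Finite.equiv_iff
      (kerDsumEquivOfInjective _ _ (bijective_of_isUnit hS.adjoint).injective)]
  simp only [isClosed_univ, and_true]

theorem opIndex_dsum_of_isUnit (T : E →L[ℂ] E) {S : F →L[ℂ] F} (hS : IsUnit S) :
    opIndex (dsum T S) = opIndex T :=
  opIndex_eq_of_linearEquiv (kerDsumEquivOfInjective T S (bijective_of_isUnit hS).injective)
    (adjoint_dsum T S ▸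
      kerDsumEquivOfInjective _ _ (bijective_of_isUnit hS.adjoint).injective)

theorem rhoSF_dsum_of_isUnit (A : E →L[ℂ] E) {B : F →L[ℂ] F}
    (hB : ∀ l ∈ rhoSF A, IsUnit (B - l • 1)) : rhoSF (dsum A B) = rhoSF A := by
  ext l
  change IsSemiFredholm (dsum A B - l • 1) ↔ IsSemiFredholm (A - l • 1)
  rw [dsum_sub_smul_one]
  exact ⟨IsSemiFredholm.of_dsum, fun hl => (isSemiFredholm_dsum_iff_of_isUnit _ (hB l hl)).2 hl⟩

end

theorem dsum_semiFredholm_data_general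
    (E : Type u) [NormedAddCommGroup E] [InnerProductSpace ℂ E] [CompleteSpace E]
    (F : Type u) [NormedAddCommGroup F] [InnerProductSpace ℂ F] [CompleteSpace F]
    (A : E →L[ℂ] E) (B : F →L[ℂ] F)
    (hB2 : spectrum ℂ B = (rhoSF A)ᶜ) :
    rhoSF (dsum A B) = rhoSF A ∧
      (∀ l ∈ rhoSF (dsum A B),
        opIndex (dsum A B - l • (1 : WithLp 2 (E × F) →L[ℂ] WithLp 2 (E × F))) =
          opIndex (A - l • (1 : E →L[ℂ] E))) ∧
      ∀ l ∈ rhoSF (dsum A B), ∀ k : ℕ, 1 ≤ k →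
        min (Module.rank ℂ (LinearMap.ker
              (((dsum A B - l • (1 : WithLp 2 (E × F) →L[ℂ] WithLp 2 (E × F))) ^ k : WithLp 2 (E × F) →L[ℂ] WithLp 2 (E × F)) : WithLp 2 (E × F) →ₗ[ℂ] WithLp 2 (E × F))))
            (Module.rank ℂ (LinearMap.ker (ContinuousLinearMap.adjoint
              ((dsum A B - l • (1 : WithLp 2 (E × F) →L[ℂ] WithLp 2 (E × F))) ^ k) : WithLp 2 (E × F) →ₗ[ℂ] WithLp 2 (E × F)))) =
          min (Module.rank ℂ (LinearMap.ker (((A - l • (1 : E →L[ℂ] E)) ^ k : E →L[ℂ] E) : E →ₗ[ℂ] E)))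
            (Module.rank ℂ (LinearMap.ker (ContinuousLinearMap.adjoint
              ((A - l • (1 : E →L[ℂ] E)) ^ k) : E →ₗ[ℂ] E))) := by
  have hunit : ∀ l ∈ rhoSF A, IsUnit (B - l • 1) := fun l hl =>
    ContinuousLinearMap.isUnit_sub_smul_one_of_notMem_spectrum (by rwa [hB2, Set.notMem_compl_iff])
  have hrho := rhoSF_dsum_of_isUnit A hunit
  refine ⟨hrho, fun l hl => ?_, fun l hl k _ => ?_⟩
  · rw [dsum_sub_smul_one, opIndex_dsum_of_isUnit _ (hunit l (hrho ▸ hl))]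
  · have hBk := (hunit l (hrho ▸ hl)).pow k
    rw [dsum_sub_smul_one, dsum_pow, adjoint_dsum,
      (kerDsumEquivOfInjective _ _
        (ContinuousLinearMap.bijective_of_isUnit hBk).injective).rank_eq,
      (kerDsumEquivOfInjective _ _
        (ContinuousLinearMap.bijective_of_isUnit hBk.adjoint).injective).rank_eq]

/-- Let `H`, `H̃` be separable complex Hilbert spaces, `A ∈ B(H)`,
`B ∈ B(H̃)` with `σ(B) = σ_p(B) = ℂ \\ ρ_sF(A)`.  Then (i) `ρ_sF(A ⊕ B) = ρ_sF(A)`;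
(ii) `ind (A ⊕ B - l) = ind (A - l)` for all `l ∈ ρ_sF(A ⊕ B)`; (iii)
`min ind ((A ⊕ B - l)^k) = min ind ((A - l)^k)` for all `l ∈ ρ_sF(A ⊕ B)` and `k ≥ 1`,
where `min ind x = min (dim ker x) (dim ker x*)`. -/
theorem dsum_semiFredholm_data
    (E : Type u) [NormedAddCommGroup E] [InnerProductSpace ℂ E] [CompleteSpace E]
    [TopologicalSpace.SeparableSpace E]
    (F : Type u) [NormedAddCommGroup F] [InnerProductSpace ℂ F] [CompleteSpace F]
    [TopologicalSpace.SeparableSpace F]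
    (A : E →L[ℂ] E) (B : F →L[ℂ] F)
    (hB1 : spectrum ℂ B = pointSpectrum B) (hB2 : spectrum ℂ B = (rhoSF A)ᶜ) :
    rhoSF (dsum A B) = rhoSF A ∧
      (∀ l ∈ rhoSF (dsum A B),
        opIndex (dsum A B - l • (1 : WithLp 2 (E × F) →L[ℂ] WithLp 2 (E × F))) =
          opIndex (A - l • (1 : E →L[ℂ] E))) ∧
      ∀ l ∈ rhoSF (dsum A B), ∀ k : ℕ, 1 ≤ k →
        min (Module.rank ℂ (LinearMap.ker
              (((dsum A B - l • (1 : WithLp 2 (E × F) →L[ℂ] WithLp 2 (E × F))) ^ k : WithLp 2 (E × F) →L[ℂ] WithLp 2 (E × F)) : WithLp 2 (E × F) →ₗ[ℂ] WithLp 2 (E × F))))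
            (Module.rank ℂ (LinearMap.ker (ContinuousLinearMap.adjoint
              ((dsum A B - l • (1 : WithLp 2 (E × F) →L[ℂ] WithLp 2 (E × F))) ^ k) : WithLp 2 (E × F) →ₗ[ℂ] WithLp 2 (E × F)))) =
          min (Module.rank ℂ (LinearMap.ker (((A - l • (1 : E →L[ℂ] E)) ^ k : E →L[ℂ] E) : E →ₗ[ℂ] E)))
            (Module.rank ℂ (LinearMap.ker (ContinuousLinearMap.adjoint
              ((A - l • (1 : E →L[ℂ] E)) ^ k) : E →ₗ[ℂ] E))) :=
  dsum_semiFredholm_data_general E F A B hB2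

end
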